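/- arXiv:1010.5608 — 8 statements merged into one kernel-verified Lean document; each statement's English description precedes it below -/
import Mathlib

section
/- Fix natural numbers $n \geq 1$ and $d \geq 1$. The real function $f(x) = \frac{n}{d\,x} - \frac{1}{1-(1-\frac{x}{n})^d}$ is decreasing (antitone) on the interval $[1, n]$, i.e., for all real $x, y$ with $1 \leq x \leq y \leq n$ one has $f(y) \leq f(x)$. -/
/-!
With `u = 1 - x / n`, the inequality `f' ≤ 0` is equivalent to
`d² (1 - u)² u^(d-1) ≤ (1 - u^d)²`, i.e. to `d · u^((d-1)/2) ≤ 1 + u + ⋯ + u^(d-1)`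
(divide by `(1 - u)²`): the arithmetic mean of the geometric progression `1, u, …, u^(d-1)`
dominates its geometric mean.
-/

open Finset

lemma two_mul_pow_le_sq_pow_add_sq_pow {R : Type*} [CommRing R] [LinearOrder R]
    [IsStrictOrderedRing R] (v : R) {k m : ℕ} (hk : k ≤ m) :
    2 * v ^ m ≤ (v ^ 2) ^ k + (v ^ 2) ^ (m - k) := by
  have hsplit : v ^ k * v ^ (m - k) = v ^ m := by rw [← pow_add, Nat.add_sub_cancel' hk]
  rw [← pow_mul, ← pow_mul, mul_comm 2 k, mul_comm 2 (m - k), pow_mul, pow_mul, ← hsplit]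
  nlinarith [sq_nonneg (v ^ k - v ^ (m - k))]

/-- AM-GM for the geometric progression `1, v², …, v^(2(d-1))`, whose geometric mean is
`|v|^(d-1)`: pair each term with its reflection about the middle. -/
lemma nat_mul_pow_le_geom_sum_sq {R : Type*} [CommRing R] [LinearOrder R]
    [IsStrictOrderedRing R] (v : R) (d : ℕ) :
    d * v ^ (d - 1) ≤ ∑ k ∈ range d, (v ^ 2) ^ k := by
  have hpair : ∑ k ∈ range d, 2 * v ^ (d - 1)
      ≤ ∑ k ∈ range d, ((v ^ 2) ^ k + (v ^ 2) ^ (d - 1 - k)) :=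
    sum_le_sum fun k hk => two_mul_pow_le_sq_pow_add_sq_pow v (by rw [mem_range] at hk; omega)
  rw [sum_add_distrib, sum_range_reflect (fun k => (v ^ 2) ^ k), sum_const, card_range,
    nsmul_eq_mul] at hpair
  linarith

lemma sq_mul_sq_one_sub_mul_pow_le_sq {u : ℝ} (hu : 0 ≤ u) (d : ℕ) :
    (d : ℝ) ^ 2 * (1 - u) ^ 2 * u ^ (d - 1) ≤ (1 - u ^ d) ^ 2 := by
  obtain ⟨v, hv, rfl⟩ : ∃ v, 0 ≤ v ∧ v ^ 2 = u := ⟨√u, Real.sqrt_nonneg u, Real.sq_sqrt hu⟩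
  calc (d : ℝ) ^ 2 * (1 - v ^ 2) ^ 2 * (v ^ 2) ^ (d - 1)
      = (d * v ^ (d - 1)) ^ 2 * (1 - v ^ 2) ^ 2 := by ring
    _ ≤ (∑ k ∈ range d, (v ^ 2) ^ k) ^ 2 * (1 - v ^ 2) ^ 2 := by
      gcongr
      exact nat_mul_pow_le_geom_sum_sq v d
    _ = (1 - (v ^ 2) ^ d) ^ 2 := by rw [← mul_pow, geom_sum_mul_neg]

lemma one_sub_one_sub_div_pow_pos {N x : ℝ} (hx : 0 < x) (hxN : x ≤ N) {d : ℕ} (hd : d ≠ 0) :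
    0 < 1 - (1 - x / N) ^ d := by
  have hN : 0 < N := hx.trans_le hxN
  have hu0 : 0 ≤ 1 - x / N := sub_nonneg.2 ((div_le_one hN).2 hxN)
  have hu1 : 1 - x / N < 1 := sub_lt_self 1 (div_pos hx hN)
  exact sub_pos.2 (pow_lt_one₀ hu0 hu1 hd)

lemma hasDerivAt_div_mul_sub_inv_one_sub_pow {N x : ℝ} (hN : N ≠ 0) (hx : x ≠ 0) {d : ℕ}
    (hd : d ≠ 0) (hg : 1 - (1 - x / N) ^ d ≠ 0) :
    HasDerivAt (fun x : ℝ => N / (d * x) - 1 / (1 - (1 - x / N) ^ d))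
      (-(N / (d * x ^ 2)) + d * (1 - x / N) ^ (d - 1) / (N * (1 - (1 - x / N) ^ d) ^ 2)) x := by
  have hlin : HasDerivAt (fun x : ℝ => d * x) d x := by
    simpa using (hasDerivAt_id x).const_mul (d : ℝ)
  have hu : HasDerivAt (fun x : ℝ => 1 - x / N) (-(1 / N)) x := by
    simpa using ((hasDerivAt_id x).div_const N).const_sub 1
  refine (((hasDerivAt_const x N).div hlin (by positivity)).sub
    ((hasDerivAt_const x (1 : ℝ)).div ((hu.fun_pow d).const_sub 1) hg)).congr_deriv ?_
  field_simp
  ring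

lemma antitoneOn_div_mul_sub_inv_one_sub_pow (N : ℝ) {d : ℕ} (hd : d ≠ 0) :
    AntitoneOn (fun x : ℝ => N / (d * x) - 1 / (1 - (1 - x / N) ^ d)) (Set.Ioc 0 N) := by
  have hderiv (x : ℝ) (hx : x ∈ Set.Ioc 0 N) :=
    hasDerivAt_div_mul_sub_inv_one_sub_pow (hx.1.trans_le hx.2).ne' hx.1.ne' hd
      (one_sub_one_sub_div_pow_pos hx.1 hx.2 hd).ne'
  refine antitoneOn_of_hasDerivWithinAt_nonpos (convex_Ioc 0 N)
    (fun x hx => (hderiv x hx).continuousAt.continuousWithinAt)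
    (fun x hx => (hderiv x (interior_subset hx)).hasDerivWithinAt) fun x hx => ?_
  rw [interior_Ioc] at hx
  have hN : 0 < N := hx.1.trans hx.2
  have hamgm := sq_mul_sq_one_sub_mul_pow_le_sq (sub_nonneg.2 ((div_le_one hN).2 hx.2.le)) d
  rw [sub_sub_cancel] at hamgm
  have hg := one_sub_one_sub_div_pow_pos hx.1 hx.2.le hd
  rw [neg_add_nonpos_iff, div_le_div_iff₀ (mul_pos hN (pow_pos hg 2))
    (mul_pos (Nat.cast_pos.2 (Nat.pos_of_ne_zero hd)) (pow_pos hx.1 2))]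
  calc d * (1 - x / N) ^ (d - 1) * (d * x ^ 2)
      = N ^ 2 * ((d : ℝ) ^ 2 * (x / N) ^ 2 * (1 - x / N) ^ (d - 1)) := by field_simp
    _ ≤ N ^ 2 * (1 - (1 - x / N) ^ d) ^ 2 := by gcongr
    _ = N * (N * (1 - (1 - x / N) ^ d) ^ 2) := by ring

theorem f_decreasing_general (n d : ℕ) :
    ∀ x y : ℝ, 1 ≤ x → x ≤ y → y ≤ n →
      (n : ℝ) / (d * y) - 1 / (1 - (1 - y / n) ^ d)
        ≤ (n : ℝ) / (d * x) - 1 / (1 - (1 - x / n) ^ d) := by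
  intro x y hx hxy hyn
  rcases eq_or_ne d 0 with rfl | hd
  · simp -- for `d = 0` both denominators vanish, and `a / 0 = 0`
  exact antitoneOn_div_mul_sub_inv_one_sub_pow n hd ⟨by linarith, hxy.trans hyn⟩
    ⟨by linarith, hyn⟩ hxy

theorem f_decreasing (n d : ℕ) (hn : 1 ≤ n) (hd : 1 ≤ d) :
    ∀ x y : ℝ, 1 ≤ x → x ≤ y → y ≤ n →
      (n : ℝ) / (d * y) - 1 / (1 - (1 - y / n) ^ d)
        ≤ (n : ℝ) / (d * x) - 1 / (1 - (1 - x / n) ^ d) :=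
  f_decreasing_general n d
end

section
/- Fix natural numbers $n \geq 1$ and $d \geq 1$. For every natural number $i$ with $1 \leq i \leq n$, $$\frac{1}{d} - 1 \;\leq\; \frac{n}{d\, i} - \frac{1}{1-(1-\frac{i}{n})^d} \;\leq\; 0.$$ -/
/-!
Put `x = i / n ∈ (0, 1]` and `y = 1 - x`. The upper bound is Bernoulli's inequality
`1 - d x ≤ y ^ d`. After clearing denominators the lower bound reads `d x y ^ d ≤ y (1 - y ^ d)`,
which is `y` times the tangent-line inequality `d y ^ (d - 1) (1 - y) ≤ 1 - y ^ d` for the convex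
function `t ↦ t ^ d`; the latter follows from `1 - y ^ d = (1 - y) ∑_{k < d} y ^ k` and
`y ^ k ≥ y ^ (d - 1)` for `k < d`.
-/

open Finset

section OrderedRing

variable {R : Type*} [CommRing R] [LinearOrder R] [IsStrictOrderedRing R] {y : R}

theorem succ_mul_pow_le_geom_sum (hy0 : 0 ≤ y) (hy1 : y ≤ 1) (m : ℕ) :
    (m + 1) * y ^ m ≤ ∑ k ∈ range (m + 1), y ^ k := by
  have := card_nsmul_le_sum (range (m + 1)) (y ^ ·) (y ^ m) fun k hk ↦
    pow_le_pow_of_le_one hy0 hy1 (Nat.lt_succ_iff.mp (mem_range.mp hk))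
  simpa [nsmul_eq_mul] using this

theorem succ_mul_pow_mul_sub_le_one_sub_pow (hy0 : 0 ≤ y) (hy1 : y ≤ 1) (m : ℕ) :
    (m + 1) * y ^ m * (1 - y) ≤ 1 - y ^ (m + 1) := by
  rw [← geom_sum_mul_of_le_one hy1]
  exact mul_le_mul_of_nonneg_right (succ_mul_pow_le_geom_sum hy0 hy1 m) (sub_nonneg.mpr hy1)

end OrderedRing

section Real

variable {x : ℝ} {d : ℕ}

theorem one_sub_one_sub_pow_pos (hx0 : 0 < x) (hx1 : x ≤ 1) (hd : 0 < d) :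
    0 < 1 - (1 - x) ^ d :=
  sub_pos.mpr (pow_lt_one₀ (by linarith) (by linarith) hd.ne')

theorem one_div_mul_sub_one_div_one_sub_pow_nonpos (hx0 : 0 < x) (hx1 : x ≤ 1) (hd : 0 < d) :
    1 / (d * x) - 1 / (1 - (1 - x) ^ d) ≤ 0 := by
  have hbernoulli : 1 - d * x ≤ (1 - x) ^ d := by
    simpa [sub_eq_add_neg] using one_add_mul_le_pow (a := -x) (by linarith) d
  rw [sub_nonpos]
  exact one_div_le_one_div_of_le (one_sub_one_sub_pow_pos hx0 hx1 hd) (by linarith)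

theorem one_div_sub_one_le_one_div_mul_sub_one_div_one_sub_pow (hx0 : 0 < x) (hx1 : x ≤ 1)
    (hd : 0 < d) :
    1 / (d : ℝ) - 1 ≤ 1 / (d * x) - 1 / (1 - (1 - x) ^ d) := by
  have hpos := one_sub_one_sub_pow_pos hx0 hx1 hd
  obtain ⟨m, rfl⟩ := Nat.exists_eq_add_one_of_ne_zero hd.ne'
  have htangent : (m + 1) * x * (1 - x) ^ (m + 1) ≤ (1 - x) * (1 - (1 - x) ^ (m + 1)) := by
    have := mul_le_mul_of_nonneg_left
      (succ_mul_pow_mul_sub_le_one_sub_pow (y := 1 - x) (by linarith) (by linarith) m)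
      (by linarith : 0 ≤ 1 - x)
    rw [pow_succ] at this ⊢
    linarith
  push_cast at hpos ⊢
  rw [div_sub_div _ _ (by positivity) hpos.ne', div_sub_one (by positivity),
    div_le_div_iff₀ (by positivity) (by positivity)]
  nlinarith [mul_le_mul_of_nonneg_left htangent (by positivity : (0 : ℝ) ≤ m + 1)]

end Real

theorem f_bounds_general (n d : ℕ) (hd : 1 ≤ d) :
    ∀ i : ℕ, 1 ≤ i → i ≤ n →
      1 / (d : ℝ) - 1 ≤ (n : ℝ) / (d * i) - 1 / (1 - (1 - (i : ℝ) / n) ^ d) ∧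
      (n : ℝ) / (d * i) - 1 / (1 - (1 - (i : ℝ) / n) ^ d) ≤ 0 := by
  intro i hi hin
  have hn : (0 : ℝ) < n := by exact_mod_cast hi.trans hin
  have hx0 : 0 < (i : ℝ) / n := div_pos (by exact_mod_cast hi) hn
  have hx1 : (i : ℝ) / n ≤ 1 := (div_le_one hn).mpr (by exact_mod_cast hin)
  have hrw : (n : ℝ) / (d * i) = 1 / (d * (i / n)) := by field_simp
  rw [hrw]
  exact ⟨one_div_sub_one_le_one_div_mul_sub_one_div_one_sub_pow hx0 hx1 hd,
    one_div_mul_sub_one_div_one_sub_pow_nonpos hx0 hx1 hd⟩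

theorem f_bounds (n d : ℕ) (hn : 1 ≤ n) (hd : 1 ≤ d) :
    ∀ i : ℕ, 1 ≤ i → i ≤ n →
      1 / (d : ℝ) - 1 ≤ (n : ℝ) / (d * i) - 1 / (1 - (1 - (i : ℝ) / n) ^ d) ∧
      (n : ℝ) / (d * i) - 1 / (1 - (1 - (i : ℝ) / n) ^ d) ≤ 0 :=
  f_bounds_general n d hd
end

section
/- Let $d \geq 1$ be a real number. For every real $x$ with $0 \leq x \leq 1$, $$x + d\,x + 2(1-x)^{\frac{d+1}{2}} - 2 \;\geq\; 0,$$ where $(1-x)^{\frac{d+1}{2}}$ denotes the real power of the nonnegative base $1-x$. -/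
theorem h_nonneg (d : ℝ) (hd : 1 ≤ d) :
    ∀ x : ℝ, 0 ≤ x → x ≤ 1 →
      x + d * x + 2 * (1 - x) ^ ((d + 1) / 2) - 2 ≥ 0 := by
  intro x hx hx1
  have hp : (1:ℝ) ≤ (d + 1) / 2 := by linarith
  have hB := one_add_mul_self_le_rpow_one_add (s := -x) (by linarith) hp
  have : (1 + -x) = 1 - x := by ring
  rw [this] at hB
  nlinarith [hB]
end

section
/- Let $d \geq 1$ be a natural number. For every real $x$ with $0 \leq x \leq 1$, $$1 - (1-x)^d \;\geq\; d\, x\, (1-x)^{\frac{d-1}{2}},$$ where $(1-x)^d$ is a natural-number power and $(1-x)^{\frac{d-1}{2}}$ denotes the real power of the nonnegative base $1-x$. -/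
/-! Write `t = 1 - x`. Then `1 - t ^ d = x * (1 + t + ⋯ + t ^ (d - 1))`, and by AM-GM the geometric
sum is at least `d` times the geometric mean of its terms, which is `t ^ ((d - 1) / 2)`. -/

open Finset

lemma prod_range_pow_rpow_inv_card {t : ℝ} (ht : 0 ≤ t) {d : ℕ} (hd : d ≠ 0) :
    (∏ i ∈ range d, t ^ i) ^ (d : ℝ)⁻¹ = t ^ (((d : ℝ) - 1) / 2) := by
  have gauss : ((∑ i ∈ range d, i : ℕ) : ℝ) = d * (d - 1) / 2 := by
    have := congrArg (Nat.cast : ℕ → ℝ) (sum_range_id_mul_two d)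
    push_cast [Nat.cast_sub (Nat.one_le_iff_ne_zero.2 hd)] at this
    push_cast; linarith
  rw [prod_pow_eq_pow_sum, ← Real.rpow_natCast, ← Real.rpow_mul ht, gauss]
  field_simp

lemma mul_rpow_le_geom_sum {t : ℝ} (ht : 0 ≤ t) (d : ℕ) :
    d * t ^ (((d : ℝ) - 1) / 2) ≤ ∑ i ∈ range d, t ^ i := by
  rcases eq_or_ne d 0 with rfl | hd
  · simp
  have amgm := Real.geom_mean_le_arith_mean (range d) (fun _ => 1) (fun i => t ^ i)
    (fun _ _ => zero_le_one) (by simpa using Nat.pos_of_ne_zero hd) (fun i _ => by positivity)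
  simp only [Real.rpow_one, sum_const, card_range, nsmul_eq_mul, mul_one, one_mul] at amgm
  rw [prod_range_pow_rpow_inv_card ht hd, le_div_iff₀ (by positivity)] at amgm
  linarith

theorem g_inequality_general (d : ℕ) :
    ∀ x : ℝ, 0 ≤ x → x ≤ 1 →
      1 - (1 - x) ^ d ≥ (d : ℝ) * x * (1 - x) ^ (((d : ℝ) - 1) / 2) := by
  intro x hx hx1
  calc (d : ℝ) * x * (1 - x) ^ (((d : ℝ) - 1) / 2)
      = x * (d * (1 - x) ^ (((d : ℝ) - 1) / 2)) := by ring
    _ ≤ x * ∑ i ∈ range d, (1 - x) ^ i :=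
      mul_le_mul_of_nonneg_left (mul_rpow_le_geom_sum (sub_nonneg.2 hx1) d) hx
    _ = 1 - (1 - x) ^ d := by simpa using mul_neg_geom_sum (1 - x) d

theorem g_inequality (d : ℕ) (hd : 1 ≤ d) :
    ∀ x : ℝ, 0 ≤ x → x ≤ 1 →
      1 - (1 - x) ^ d ≥ (d : ℝ) * x * (1 - x) ^ (((d : ℝ) - 1) / 2) :=
  g_inequality_general d
end

section
/- Define $S(n,d) = \sum_{i=0}^{n-1} \frac{1}{1 - \binom{i}{d}/\binom{n}{d}}$ and $H_n = \sum_{k=1}^{n} \frac{1}{k}$ as real numbers. For all natural numbers $n, d$ with $1 \leq d \leq n$, $$S(n,d) \;\geq\; \left(1 - \frac{d-1}{n}\right)\,\frac{n\, H_n}{d}.$$ -/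
noncomputable def S (n d : ℕ) : ℝ :=
  ∑ i ∈ Finset.range n, 1 / (1 - (i.choose d : ℝ) / (n.choose d : ℝ))

noncomputable def H (n : ℕ) : ℝ := ∑ k ∈ Finset.Icc 1 n, 1 / (k : ℝ)

/-!
Since `C(n,d) - C(i,d) = ∑_{i ≤ j < n} C(j,d-1) ≤ (n-i) C(n,d-1)`
and `(n-d+1) C(n,d-1) = d C(n,d)`, the `i`-th term `C(n,d) / (C(n,d) - C(i,d))` of `S n d`
is at least `(n-d+1) / (d (n-i))`. Summing over `i < n` gives
`(n-d+1)/d · H n`, since `∑_{i<n} 1/(n-i) = H n`.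
-/

open Finset

theorem Nat.choose_succ_le_add_mul {i n : ℕ} (e : ℕ) (hin : i ≤ n) :
    n.choose (e + 1) ≤ i.choose (e + 1) + (n - i) * n.choose e := by
  induction n, hin using Nat.le_induction with
  | base => simp
  | succ n hin ih =>
    rw [Nat.choose_succ_succ', Nat.sub_add_comm hin, Nat.succ_mul]
    have mono := Nat.choose_le_choose e (n.le_add_right 1)
    have := Nat.mul_le_mul_left (n - i) mono
    omega

theorem Nat.choose_lt_choose_of_lt {i n d : ℕ} (hd : 1 ≤ d) (hdn : d ≤ n) (hin : i < n) :
    i.choose d < n.choose d := by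
  rcases lt_or_ge i d with hid | hdi
  · rw [Nat.choose_eq_zero_of_lt hid]
    exact Nat.choose_pos hdn
  · obtain ⟨e, rfl⟩ : ∃ e, d = e + 1 := ⟨d - 1, by omega⟩
    calc i.choose (e + 1) < i.choose e + i.choose (e + 1) :=
          Nat.lt_add_of_pos_left (Nat.choose_pos (by omega))
      _ = (i + 1).choose (e + 1) := (Nat.choose_succ_succ i e).symm
      _ ≤ n.choose (e + 1) := Nat.choose_le_choose _ hin

theorem H_eq_sum_one_div_sub (n : ℕ) : H n = ∑ i ∈ range n, 1 / ((n : ℝ) - i) := by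
  refine sum_nbij' (n - ·) (n - ·) ?_ ?_ ?_ ?_ ?_ <;> intro k hk <;> simp_all <;> omega

theorem mul_choose_sub_choose_le {n d i : ℕ} (hd : 1 ≤ d) (hdn : d ≤ n) (hin : i ≤ n) :
    ((n : ℝ) - d + 1) * (n.choose d - i.choose d) ≤ d * (n - i) * n.choose d := by
  obtain ⟨e, rfl⟩ : ∃ e, d = e + 1 := ⟨d - 1, by omega⟩
  have gap : (n.choose (e + 1) : ℝ) ≤ i.choose (e + 1) + (n - i) * n.choose e := by
    rw [← Nat.cast_sub hin]
    exact_mod_cast Nat.choose_succ_le_add_mul e hin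
  have absorb : (n.choose (e + 1) : ℝ) * (e + 1) = n.choose e * (n - e) := by
    rw [← Nat.cast_sub (by omega : e ≤ n)]
    exact_mod_cast Nat.choose_succ_right_eq n e
  have hne : (0 : ℝ) ≤ n - e := by
    rw [sub_nonneg]; exact_mod_cast (by omega : e ≤ n)
  push_cast
  nlinarith [mul_le_mul_of_nonneg_left gap hne]

theorem div_le_one_div_one_sub_choose_div {n d i : ℕ} (hd : 1 ≤ d) (hdn : d ≤ n)
    (hin : i < n) :
    ((n : ℝ) - d + 1) / (d * (n - i)) ≤ 1 / (1 - (i.choose d : ℝ) / n.choose d) := by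
  have hc : (0 : ℝ) < n.choose d := by exact_mod_cast Nat.choose_pos hdn
  have hlt : (i.choose d : ℝ) < n.choose d := by
    exact_mod_cast Nat.choose_lt_choose_of_lt hd hdn hin
  have hni : (0 : ℝ) < n - i := by rw [sub_pos]; exact_mod_cast hin
  rw [one_sub_div hc.ne', one_div_div, div_le_div_iff₀ (by positivity) (by linarith)]
  linarith [mul_choose_sub_choose_le hd hdn hin.le]

theorem S_lower_bound (n d : ℕ) (hd : 1 ≤ d) (hdn : d ≤ n) :
    S n d ≥ (1 - ((d : ℝ) - 1) / n) * ((n : ℝ) * H n / d) := by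
  have hn : (n : ℝ) ≠ 0 := by exact_mod_cast (by omega : n ≠ 0)
  have hd0 : (d : ℝ) ≠ 0 := by positivity
  have rhs_eq : (1 - ((d : ℝ) - 1) / n) * ((n : ℝ) * H n / d)
      = ∑ i ∈ range n, ((n : ℝ) - d + 1) / (d * (n - i)) := by
    calc _ = ((n : ℝ) - d + 1) / d * H n := by field_simp; ring
      _ = _ := by
        rw [H_eq_sum_one_div_sub, mul_sum]
        exact sum_congr rfl fun i _ => by rw [div_mul_div_comm, mul_one]
  rw [ge_iff_le, rhs_eq]
  exact sum_le_sum fun i hi => div_le_one_div_one_sub_choose_div hd hdn (mem_range.1 hi)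
end

section
/- Define $S(n,d) = \sum_{i=0}^{n-1} \frac{1}{1 - \binom{i}{d}/\binom{n}{d}}$ and $H_n = \sum_{k=1}^{n} \frac{1}{k}$ as real numbers. For all natural numbers $n, d$ with $1 \leq d \leq n$, $$S(n,d) \;\leq\; \frac{n\, H_n}{d} + n\left(1 - \frac{1}{d}\right).$$ -/
open Finset

theorem Nat.pow_mul_descFactorial_le_pow_mul_descFactorial {i n : ℕ} (h : i ≤ n) (d : ℕ) :
    n ^ d * i.descFactorial d ≤ i ^ d * n.descFactorial d := by
  induction d with
  | zero => simp
  | succ d ih =>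
    have step : n * (i - d) ≤ i * (n - d) := by
      rcases le_or_gt i d with hid | hid
      · simp [Nat.sub_eq_zero_of_le hid]
      · zify [hid.le, hid.le.trans h]
        nlinarith
    calc n ^ (d + 1) * i.descFactorial (d + 1)
        = (n * (i - d)) * (n ^ d * i.descFactorial d) := by
          rw [Nat.descFactorial_succ, pow_succ]; ring
      _ ≤ (i * (n - d)) * (i ^ d * n.descFactorial d) := Nat.mul_le_mul step ih
      _ = i ^ (d + 1) * n.descFactorial (d + 1) := by
          rw [Nat.descFactorial_succ, pow_succ]; ring

theorem Nat.pow_mul_choose_le_pow_mul_choose {i n : ℕ} (h : i ≤ n) (d : ℕ) :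
    n ^ d * i.choose d ≤ i ^ d * n.choose d := by
  have := Nat.pow_mul_descFactorial_le_pow_mul_descFactorial h d
  rw [Nat.descFactorial_eq_factorial_mul_choose, Nat.descFactorial_eq_factorial_mul_choose,
    mul_left_comm, mul_left_comm (i ^ d)] at this
  exact Nat.le_of_mul_le_mul_left this d.factorial_pos

theorem choose_div_choose_le_div_pow {i n d : ℕ} (h : i ≤ n) (hdn : d ≤ n) :
    (i.choose d : ℝ) / n.choose d ≤ ((i : ℝ) / n) ^ d := by
  have hchoose : (0 : ℝ) < n.choose d := by exact_mod_cast Nat.choose_pos hdn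
  have hpow : (0 : ℝ) < (n : ℝ) ^ d := by
    exact_mod_cast (Nat.choose_pos hdn).trans_le (Nat.choose_le_pow n d)
  rw [div_pow, div_le_div_iff₀ hchoose hpow]
  have key : ((n ^ d * i.choose d : ℕ) : ℝ) ≤ ((i ^ d * n.choose d : ℕ) : ℝ) := by
    exact_mod_cast Nat.pow_mul_choose_le_pow_mul_choose h d
  push_cast at key
  linarith

theorem natCast_mul_pow_mul_one_sub_le {x : ℝ} (hx₀ : 0 ≤ x) (hx₁ : x ≤ 1) (d : ℕ) :
    d * x ^ d * (1 - x) ≤ x * (1 - x ^ d) := by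
  have hterm : ∀ j ∈ range d, x ^ d ≤ x ^ (j + 1) := fun j hj =>
    pow_le_pow_of_le_one hx₀ hx₁ (mem_range.1 hj)
  calc d * x ^ d * (1 - x) = (∑ _j ∈ range d, x ^ d) * (1 - x) := by simp
    _ ≤ (∑ j ∈ range d, x ^ (j + 1)) * (1 - x) :=
      mul_le_mul_of_nonneg_right (sum_le_sum hterm) (sub_nonneg.2 hx₁)
    _ = x * (1 - x ^ d) := by
      simp_rw [pow_succ', ← mul_sum]
      rw [mul_assoc, geom_sum_mul_neg]

theorem one_div_one_sub_pow_le {x : ℝ} (hx₀ : 0 ≤ x) (hx₁ : x < 1) {d : ℕ} (hd : 0 < d) :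
    1 / (1 - x ^ d) ≤ 1 + (1 / (1 - x) - 1) / d := by
  have h1x : 0 < 1 - x := sub_pos.2 hx₁
  have h1xd : 0 < 1 - x ^ d := sub_pos.2 (pow_lt_one₀ hx₀ hx₁ hd.ne')
  have hd' : (0 : ℝ) < d := by exact_mod_cast hd
  have := natCast_mul_pow_mul_one_sub_le hx₀ hx₁.le d
  have hgeom : 1 / (1 - x) - 1 = x / (1 - x) := by field_simp; ring
  rw [hgeom, div_div, one_add_div (by positivity), div_le_div_iff₀ h1xd (by positivity)]
  nlinarith

theorem sum_range_one_div_one_sub_div (n : ℕ) :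
    ∑ i ∈ range n, 1 / (1 - (i : ℝ) / n) = n * H n := by
  have hterm : ∀ i ∈ range n, 1 / (1 - (i : ℝ) / n) = n * (1 / ((n - i : ℕ) : ℝ)) := by
    intro i hi
    have hi := mem_range.1 hi
    have hn : (0 : ℝ) < n := by exact_mod_cast (Nat.zero_le i).trans_lt hi
    have hni : (0 : ℝ) < n - i := by simpa using hi
    rw [Nat.cast_sub hi.le]
    field_simp
  have hreflect : ∑ i ∈ range n, 1 / ((n - i : ℕ) : ℝ) = H n :=
    sum_nbij' (n - ·) (n - ·) (by simp; omega) (by simp; omega) (by simp; omega) (by simp; omega)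
      (by simp)
  rw [sum_congr rfl hterm, ← mul_sum, hreflect]

theorem one_div_one_sub_choose_div_choose_le {i n d : ℕ} (hi : i < n) (hd : 0 < d)
    (hdn : d ≤ n) :
    1 / (1 - (i.choose d : ℝ) / n.choose d) ≤ 1 + (1 / (1 - (i : ℝ) / n) - 1) / d := by
  have hn : (0 : ℝ) < n := by exact_mod_cast (Nat.zero_le i).trans_lt hi
  have hx₁ : (i : ℝ) / n < 1 := (div_lt_one hn).2 (by exact_mod_cast hi)
  have hpow : ((i : ℝ) / n) ^ d < 1 := pow_lt_one₀ (by positivity) hx₁ hd.ne'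
  calc 1 / (1 - (i.choose d : ℝ) / n.choose d) ≤ 1 / (1 - ((i : ℝ) / n) ^ d) :=
        one_div_le_one_div_of_le (sub_pos.2 hpow)
          (sub_le_sub_left (choose_div_choose_le_div_pow hi.le hdn) 1)
    _ ≤ 1 + (1 / (1 - (i : ℝ) / n) - 1) / d := one_div_one_sub_pow_le (by positivity) hx₁ hd

theorem S_upper_bound (n d : ℕ) (hd : 1 ≤ d) (hdn : d ≤ n) :
    S n d ≤ (n : ℝ) * H n / d + (n : ℝ) * (1 - 1 / (d : ℝ)) := by
  have hd' : (d : ℝ) ≠ 0 := by positivity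
  calc S n d ≤ ∑ i ∈ range n, (1 + (1 / (1 - (i : ℝ) / n) - 1) / d) :=
        sum_le_sum fun i hi => one_div_one_sub_choose_div_choose_le (mem_range.1 hi) hd hdn
    _ = n + (n * H n - n) / d := by
        rw [sum_add_distrib, ← sum_div, sum_sub_distrib, sum_range_one_div_one_sub_div]
        simp
    _ = (n : ℝ) * H n / d + (n : ℝ) * (1 - 1 / (d : ℝ)) := by
        field_simp
        ring
end

section
/- Let $d \geq 1$ be a natural number. For every real $x$ with $0 < x \leq 1$, $$\frac{1}{d\,x} \;\leq\; \frac{1}{1-(1-x)^d} \;\leq\; \frac{1}{d\,x} + 1 - \frac{1}{d}.$$ -/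
theorem per_term_estimate (d : ℕ) (hd : 1 ≤ d) :
    ∀ x : ℝ, 0 < x → x ≤ 1 →
      1 / ((d : ℝ) * x) ≤ 1 / (1 - (1 - x) ^ d) ∧
      1 / (1 - (1 - x) ^ d) ≤ 1 / ((d : ℝ) * x) + 1 - 1 / (d : ℝ) := by
  intro x hx hx1
  set y : ℝ := 1 - x with hy
  have hy0 : 0 ≤ y := by simp [hy]; linarith
  have hy1 : y < 1 := by simp [hy]; linarith
  have hd0 : (0:ℝ) < d := by exact_mod_cast hd
  have hd1 : (1:ℝ) ≤ d := by exact_mod_cast hd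
  have hpow : y ^ d < 1 := pow_lt_one₀ hy0 hy1 (by omega)
  have hpos : 0 < 1 - y ^ d := by linarith
  have hdx : 0 < (d:ℝ) * x := by positivity
  set S : ℝ := ∑ i ∈ Finset.range d, y ^ i with hSdef
  have hyx : (1:ℝ) - y = x := by simp [hy]
  have hSx : x * S = 1 - y ^ d := by
    have h := geom_sum_mul y d
    rw [← hSdef] at h
    calc x * S = (1 - y) * S := by rw [hyx]
      _ = 1 - y ^ d := by linear_combination -h
  -- lower bound
  have hbern : 1 - (d:ℝ) * x ≤ y ^ d := by
    have h := one_add_mul_le_pow (a := -x) (by linarith) d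
    have : 1 + (d:ℝ) * (-x) = 1 - (d:ℝ) * x := by ring
    rw [this] at h
    simpa [hy, sub_eq_add_neg] using h
  have hlow : 1 / ((d:ℝ) * x) ≤ 1 / (1 - y ^ d) :=
    one_div_le_one_div_of_le hpos (by linarith)
  refine ⟨hlow, ?_⟩
  -- S ≥ 1 + (d-1) y^d
  obtain ⟨n, rfl⟩ : ∃ n, d = n + 1 := ⟨d - 1, by omega⟩
  have hSsplit : S = (∑ i ∈ Finset.range n, y ^ (i + 1)) + 1 := by
    rw [hSdef, Finset.sum_range_succ']
    simp
  have hterm : ∀ i ∈ Finset.range n, y ^ (n + 1) ≤ y ^ (i + 1) := by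
    intro i hi
    exact pow_le_pow_of_le_one hy0 hy1.le (by simp at hi; omega)
  have hsumlb : (n : ℝ) * y ^ (n + 1) ≤ ∑ i ∈ Finset.range n, y ^ (i + 1) := by
    calc (n : ℝ) * y ^ (n + 1) = ∑ _i ∈ Finset.range n, y ^ (n + 1) := by
          simp [Finset.sum_const, nsmul_eq_mul]
      _ ≤ ∑ i ∈ Finset.range n, y ^ (i + 1) := Finset.sum_le_sum hterm
  have hSlb : 1 + (n : ℝ) * y ^ (n + 1) ≤ S := by
    rw [hSsplit]; linarith
  -- key: d ≤ S * (1 + (d-1) x)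
  have hcast : ((n + 1 : ℕ) : ℝ) = (n : ℝ) + 1 := by push_cast; ring
  have h2 : (n:ℝ) * (x * S) = (n:ℝ) * (1 - y ^ (n + 1)) := by rw [hSx]
  have h1 : (n:ℝ) + 1 ≤ S * (1 + (n:ℝ) * x) := by nlinarith [hSlb, h2]
  have hkey : ((n + 1 : ℕ) : ℝ) * x ≤ (1 - y ^ (n + 1)) * (1 + (n : ℝ) * x) := by
    rw [← hSx, hcast]
    nlinarith [mul_le_mul_of_nonneg_left h1 hx.le]
  -- conclude
  have hne : ((n + 1 : ℕ) : ℝ) ≠ 0 := by positivity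
  have hxne : x ≠ 0 := ne_of_gt hx
  have hrhs : 1 / (((n + 1 : ℕ) : ℝ) * x) + 1 - 1 / ((n + 1 : ℕ) : ℝ)
      = (1 + (n : ℝ) * x) / (((n + 1 : ℕ) : ℝ) * x) := by
    field_simp
    push_cast
    ring
  rw [hrhs, div_le_div_iff₀ hpos hdx]
  nlinarith [hkey]
end

section
/- Define $S(n,d) = \sum_{i=0}^{n-1} \frac{1}{1 - \binom{i}{d}/\binom{n}{d}}$ as a real number. For all natural numbers $n, d$ with $1 \leq d \leq n$, $$S(n,d) \;\geq\; d + \sum_{i=1}^{n-d} \frac{1}{1-\left(1-\frac{i}{n-d+1}\right)^d}.$$ -/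
lemma key_nat (n d i : ℕ) (hd : 1 ≤ d) (hdi : d ≤ i) (hin : i ≤ n) :
    (i - d + 1) ^ d * n.choose d ≤ (n - d + 1) ^ d * i.choose d := by
  have hfac : d.factorial > 0 := Nat.factorial_pos d
  refine Nat.le_of_mul_le_mul_right ?_ hfac
  have h1 : n.descFactorial d = d.factorial * n.choose d :=
    Nat.descFactorial_eq_factorial_mul_choose n d
  have h2 : i.descFactorial d = d.factorial * i.choose d :=
    Nat.descFactorial_eq_factorial_mul_choose i d
  calc (i - d + 1) ^ d * n.choose d * d.factorial
      = (i - d + 1) ^ d * n.descFactorial d := by rw [h1]; ring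
    _ ≤ (n - d + 1) ^ d * i.descFactorial d := by
        rw [Nat.descFactorial_eq_prod_range, Nat.descFactorial_eq_prod_range,
          show (i - d + 1) ^ d = ∏ _k ∈ Finset.range d, (i - d + 1) from by
            rw [Finset.prod_const, Finset.card_range],
          show (n - d + 1) ^ d = ∏ _k ∈ Finset.range d, (n - d + 1) from by
            rw [Finset.prod_const, Finset.card_range],
          ← Finset.prod_mul_distrib, ← Finset.prod_mul_distrib]
        apply Finset.prod_le_prod'
        intro k hk
        rw [Finset.mem_range] at hk
        have hk1 : k ≤ i := le_trans (le_of_lt (lt_of_lt_of_le hk hdi)) le_rfl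
        have hk2 : k ≤ n := le_trans hk1 hin
        zify [hdi, le_trans hdi hin, hk1, hk2]
        nlinarith [mul_nonneg (by omega : (0:ℤ) ≤ (d:ℤ) - 1 - k)
          (by omega : (0:ℤ) ≤ (n:ℤ) - i)]
    _ = (n - d + 1) ^ d * i.choose d * d.factorial := by rw [h2]; ring

lemma choose_strict (n d i : ℕ) (hd : 1 ≤ d) (hdi : d ≤ i) (hin : i < n) :
    i.choose d < n.choose d := by
  obtain ⟨k, rfl⟩ : ∃ k, d = k + 1 := ⟨d - 1, by omega⟩
  have h1 : i.choose (k + 1) < (i + 1).choose (k + 1) := by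
    rw [Nat.choose_succ_succ, Nat.succ_eq_add_one]
    have : 0 < i.choose k := Nat.choose_pos (by omega)
    omega
  exact lt_of_lt_of_le h1 (Nat.choose_le_choose _ hin)

theorem S_first_step (n d : ℕ) (hd : 1 ≤ d) (hdn : d ≤ n) :
    S n d ≥ (d : ℝ) + ∑ i ∈ Finset.Icc 1 (n - d),
      1 / (1 - (1 - (i : ℝ) / ((n : ℝ) - d + 1)) ^ d) := by
  have hdnR : (d : ℝ) ≤ n := by exact_mod_cast hdn
  have hpos : (0:ℝ) < (n : ℝ) - d + 1 := by linarith
  have hcn : (0:ℝ) < (n.choose d : ℝ) := by exact_mod_cast Nat.choose_pos hdn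
  unfold S
  rw [← Finset.sum_range_add_sum_Ico _ hdn]
  have h1 : ∑ i ∈ Finset.range d, (1:ℝ) / (1 - (i.choose d : ℝ) / (n.choose d : ℝ)) = d := by
    rw [Finset.sum_congr rfl (fun i hi => ?_), Finset.sum_const, Finset.card_range,
      nsmul_eq_mul, mul_one]
    rw [Nat.choose_eq_zero_of_lt (Finset.mem_range.mp hi)]
    norm_num
  rw [h1]
  gcongr
  -- reindex the RHS sum to Ico d n via i ↦ n - i
  rw [show ∑ i ∈ Finset.Icc 1 (n - d), 1 / (1 - (1 - (i : ℝ) / ((n : ℝ) - d + 1)) ^ d)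
      = ∑ i ∈ Finset.Ico d n, 1 / (1 - (((i:ℝ) - d + 1) / ((n : ℝ) - d + 1)) ^ d) from ?_]
  · apply Finset.sum_le_sum
    intro i hi
    rw [Finset.mem_Ico] at hi
    obtain ⟨hdi, hin⟩ := hi
    have hci : (0:ℝ) < (i.choose d : ℝ) := by exact_mod_cast Nat.choose_pos hdi
    have hkey : (((i:ℝ) - d + 1) / ((n : ℝ) - d + 1)) ^ d
        ≤ (i.choose d : ℝ) / (n.choose d : ℝ) := by
      rw [div_pow, div_le_div_iff₀ (by positivity) hcn]
      have := key_nat n d i hd hdi (le_of_lt hin)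
      have hcast : ((i:ℝ) - d + 1) = ((i - d + 1 : ℕ) : ℝ) := by
        push_cast [Nat.cast_sub hdi]; ring
      have hcast2 : ((n:ℝ) - d + 1) = ((n - d + 1 : ℕ) : ℝ) := by
        push_cast [Nat.cast_sub hdn]; ring
      rw [hcast, hcast2]
      exact_mod_cast le_of_le_of_eq this (mul_comm _ _)
    have hlt : (i.choose d : ℝ) / (n.choose d : ℝ) < 1 := by
      rw [div_lt_one hcn]
      exact_mod_cast choose_strict n d i hd hdi hin
    have hp : (0:ℝ) < 1 - (i.choose d : ℝ) / (n.choose d : ℝ) := by linarith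
    have hp2 : (0:ℝ) < 1 - (((i:ℝ) - d + 1) / ((n : ℝ) - d + 1)) ^ d := by
      nlinarith
    rw [div_le_div_iff₀ hp2 hp]
    nlinarith
  · apply Finset.sum_nbij' (fun i => n - i) (fun i => n - i)
    · intro i hi; rw [Finset.mem_Icc] at hi; rw [Finset.mem_Ico]; omega
    · intro i hi; rw [Finset.mem_Ico] at hi; rw [Finset.mem_Icc]; omega
    · intro i hi; rw [Finset.mem_Icc] at hi; omega
    · intro i hi; rw [Finset.mem_Ico] at hi; omega
    · intro i hi
      rw [Finset.mem_Icc] at hi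
      have : ((n - i : ℕ) : ℝ) = (n : ℝ) - i := by
        rw [Nat.cast_sub (by omega)]
      rw [this]
      congr 2
      field_simp
      ring
end
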